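/- arXiv:2604.07735 — 6 statements merged into one kernel-verified Lean document; each statement's English description precedes it below -/
import Mathlib

section
/- Let σ_w^2 > 0, |a|^2 > 1, V_th > σ_w^2, and S > |a|^2 V_th / (V_th - σ_w^2). Then for G > |a|^2(S-1)/(S-|a|^2), the inequality σ_w^2 S G / (S G - |a|^2(S+G-1)) ≤ V_th holds if and only if G ≥ |a|^2 V_th (S - 1) / (S (V_th - σ_w^2) - |a|^2 V_th). -/
/-- Control threshold lemma: for `S > |a|^2 V_th/(V_th - σw2)` and stable `G`,
`V_∞(G) ≤ V_th` iff `G ≥ |a|^2 V_th (S-1) / (S (V_th - σw2) - |a|^2 V_th)`. -/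
theorem control_threshold_iff
    (a : ℂ) (S G σw2 Vth : ℝ) (hσ : σw2 > 0) (ha : ‖a‖ ^ 2 > 1)
    (hVth : Vth > σw2)
    (hS : S > ‖a‖ ^ 2 * Vth / (Vth - σw2))
    (hG : G > ‖a‖ ^ 2 * (S - 1) / (S - ‖a‖ ^ 2)) :
    σw2 * S * G / (S * G - ‖a‖ ^ 2 * (S + G - 1)) ≤ Vth ↔
      G ≥ ‖a‖ ^ 2 * Vth * (S - 1) /
            (S * (Vth - σw2) - ‖a‖ ^ 2 * Vth) := by
  set A := ‖a‖ ^ 2 with hA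
  have hVσ : Vth - σw2 > 0 := by linarith
  have hSA : S > A := by
    have h1 : A < A * Vth / (Vth - σw2) := by
      rw [lt_div_iff₀ hVσ]; nlinarith
    linarith
  have hd : S * (Vth - σw2) - A * Vth > 0 := by
    have h2 := (div_lt_iff₀ hVσ).mp hS
    nlinarith
  have hD : S * G - A * (S + G - 1) > 0 := by
    have h1 : A * (S - 1) / (S - A) < G := hG
    rw [div_lt_iff₀ (by linarith)] at h1
    nlinarith
  rw [div_le_iff₀ hD, ge_iff_le, div_le_iff₀ hd]
  constructor <;> intro h <;> nlinarith
end

section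
/- Let h_D, h_U be nonzero vectors in ℂ^M, P > 0, σ² > 0, γ > 0, and define ρ = |⟨h_D, h_U⟩|² / (‖h_D‖² ‖h_U‖²) ∈ [0,1]. Then p_D := γ(P ρ ‖h_D‖² + σ²) / (‖h_D‖² (1 + γρ)) satisfies p_D ‖h_D‖² / ((P - p_D) ρ ‖h_D‖² + σ²) = γ, and moreover p_D ≤ P if and only if γ ≤ P ‖h_D‖² / σ². -/
open scoped InnerProductSpace

/-- MRT power allocation: `p_D = γ(Pρ‖h_D‖² + σ²)/(‖h_D‖²(1+γρ))` achieves the control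
SINR target `γ` with equality, and is feasible (`p_D ≤ P`) iff `γ ≤ P‖h_D‖²/σ²`. -/
theorem mrt_power_allocation
    {M : ℕ} (hD hU : EuclideanSpace ℂ (Fin M))
    (hD0 : hD ≠ 0) (hU0 : hU ≠ 0)
    (P σ2 γ : ℝ) (hP : P > 0) (hσ : σ2 > 0) (hγ : γ > 0) :
    let ρ := ‖(⟪hD, hU⟫_ℂ : ℂ)‖ ^ 2 / (‖hD‖ ^ 2 * ‖hU‖ ^ 2)
    let pD := γ * (P * ρ * ‖hD‖ ^ 2 + σ2) / (‖hD‖ ^ 2 * (1 + γ * ρ))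
    pD * ‖hD‖ ^ 2 / ((P - pD) * ρ * ‖hD‖ ^ 2 + σ2) = γ ∧
      (pD ≤ P ↔ γ ≤ P * ‖hD‖ ^ 2 / σ2) := by
  intro ρ pD
  have hnorm : (0:ℝ) < ‖hD‖ := norm_pos_iff.mpr hD0
  have ha : (0:ℝ) < ‖hD‖ ^ 2 := by positivity
  have hρ : 0 ≤ ρ := by positivity
  have hd : 0 < 1 + γ * ρ := by positivity
  have hnum : 0 < P * ρ * ‖hD‖ ^ 2 + σ2 := by positivity
  have hpD : pD = γ * (P * ρ * ‖hD‖ ^ 2 + σ2) / (‖hD‖ ^ 2 * (1 + γ * ρ)) := rfl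
  have hden : (P - pD) * ρ * ‖hD‖ ^ 2 + σ2 = (P * ρ * ‖hD‖ ^ 2 + σ2) / (1 + γ * ρ) := by
    rw [hpD]; field_simp; ring
  constructor
  · rw [hden, hpD]
    rw [div_eq_iff (by positivity)]
    field_simp
  · rw [hpD, div_le_iff₀ (by positivity), le_div_iff₀ hσ]
    constructor <;> intro h <;> nlinarith
end

section
/- Let P > 0, σ² > 0, γ > 0, g_D > 0, g_U > 0 and 0 < ρ < 1. Under zero-forcing, the control SINR constraint requires power p_D^ZF = γσ²/(g_D(1−ρ)), which is feasible (p_D^ZF ≤ P) if and only if γ ≤ (1−ρ) P g_D / σ². Under MRT, the constraint requires p_D^MRT = γ(Pρg_D + σ²)/(g_D(1+γρ)) ≤ P iff γ ≤ P g_D/σ². Consequently, for P in the interval [γσ²/g_D, γσ²/(g_D(1−ρ))), MRT is feasible while ZF is infeasible. -/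
/-- Feasibility comparison of MRT and ZF power allocations: ZF is feasible iff
`γ ≤ (1-ρ)P g_D/σ²`, MRT is feasible iff `γ ≤ P g_D/σ²`, and for
`P ∈ [γσ²/g_D, γσ²/(g_D(1-ρ)))` MRT is feasible while ZF is not. -/
theorem mrt_zf_feasibility
    (P σ2 γ gD gU ρ : ℝ) (hP : P > 0) (hσ : σ2 > 0) (hγ : γ > 0)
    (hgD : gD > 0) (hgU : gU > 0) (hρ0 : 0 < ρ) (hρ1 : ρ < 1) :
    (γ * σ2 / (gD * (1 - ρ)) ≤ P ↔ γ ≤ (1 - ρ) * P * gD / σ2) ∧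
    (γ * (P * ρ * gD + σ2) / (gD * (1 + γ * ρ)) ≤ P ↔ γ ≤ P * gD / σ2) ∧
    (γ * σ2 / gD ≤ P ∧ P < γ * σ2 / (gD * (1 - ρ)) →
      γ * (P * ρ * gD + σ2) / (gD * (1 + γ * ρ)) ≤ P ∧
        ¬ γ * σ2 / (gD * (1 - ρ)) ≤ P) := by
  have h1ρ : (0:ℝ) < 1 - ρ := by linarith
  have hden : (0:ℝ) < gD * (1 - ρ) := by positivity
  have hden2 : (0:ℝ) < gD * (1 + γ * ρ) := by positivity
  have hZF : γ * σ2 / (gD * (1 - ρ)) ≤ P ↔ γ ≤ (1 - ρ) * P * gD / σ2 := by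
    rw [div_le_iff₀ hden, le_div_iff₀ hσ]
    constructor <;> intro h <;> nlinarith
  have hMRT : γ * (P * ρ * gD + σ2) / (gD * (1 + γ * ρ)) ≤ P ↔ γ ≤ P * gD / σ2 := by
    rw [div_le_iff₀ hden2, le_div_iff₀ hσ]
    constructor <;> intro h <;> nlinarith
  refine ⟨hZF, hMRT, fun ⟨hlo, hhi⟩ => ⟨?_, not_le.mpr hhi⟩⟩
  rw [hMRT]
  rw [div_le_iff₀ hgD] at hlo
  rw [le_div_iff₀ hσ]
  nlinarith
end

section
/- Let α > 0 and |a|² > 1 and V_req > σ_w² > 0, and let γ̄_up > 0, γ̄_d > 0, α_up > 0, α_dn > 0. Define η_V = (1/γ̄_up)·(((|a|² V_req/(V_req − σ_w²)))^{1/α_up} − 1), S(x) = (1 + γ̄_up x)^{α_up}, and for x > η_V, g(x) = (|a|² V_req (S(x) − 1)/(S(x)(V_req − σ_w²) − |a|² V_req))^{1/α_dn} − 1. Then g is continuous and strictly decreasing on (η_V, ∞), g(x) → ∞ as x → η_V⁺, and g(x) converges to the finite limit (|a|² V_req/(V_req − σ_w²))^{1/α_dn} − 1 as x → ∞. -/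
open Filter Set

/-- Properties of the required downlink control SINR
`g(x) = (|a|² V_req (S(x)-1)/(S(x)(V_req-σw²)-|a|² V_req))^{1/α_dn} - 1` with
`S(x) = (1+γ̄_up x)^{α_up}`: it is continuous and strictly decreasing on `(η_V, ∞)`,
blows up as `x → η_V⁺`, and converges to
`(|a|² V_req/(V_req-σw²))^{1/α_dn} - 1` as `x → ∞`. -/
theorem required_control_sinr_props
    (a : ℂ) (Vreq σw2 γup γd αup αdn : ℝ)
    (ha : ‖a‖ ^ 2 > 1) (hσ : σw2 > 0) (hV : Vreq > σw2)
    (hγup : γup > 0) (hγd : γd > 0) (hαup : αup > 0) (hαdn : αdn > 0) :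
    let A := ‖a‖ ^ 2
    let ηV := (1 / γup) * ((A * Vreq / (Vreq - σw2)) ^ (1 / αup) - 1)
    let S := fun x : ℝ => (1 + γup * x) ^ αup
    let g := fun x : ℝ =>
      (A * Vreq * (S x - 1) / (S x * (Vreq - σw2) - A * Vreq)) ^ (1 / αdn) - 1
    ContinuousOn g (Ioi ηV) ∧
      StrictAntiOn g (Ioi ηV) ∧
      Tendsto g (nhdsWithin ηV (Ioi ηV)) atTop ∧
      Tendsto g atTop (nhds ((A * Vreq / (Vreq - σw2)) ^ (1 / αdn) - 1)) := by
  intro A ηV S g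
  have hA : (1:ℝ) < A := ha
  have hc : (0:ℝ) < Vreq - σw2 := by linarith
  have hV0 : (0:ℝ) < Vreq := lt_trans hσ hV
  set c := Vreq - σw2 with hcdef
  set K := A * Vreq / c with hKdef
  have hK1 : 1 < K := by
    rw [hKdef, lt_div_iff₀ hc]
    nlinarith
  have hK0 : (0:ℝ) < K := lt_trans one_pos hK1
  have hKr1 : 1 < K ^ (1/αup) := by
    rw [Real.one_lt_rpow_iff_of_pos hK0]
    exact Or.inl ⟨hK1, by positivity⟩
  have hηV : 1 + γup * ηV = K ^ (1/αup) := by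
    simp only [ηV]
    field_simp
    rw [hKdef, hcdef]; ring
  have hu : ∀ x ∈ Ioi ηV, K ^ (1/αup) < 1 + γup * x := by
    intro x hx
    rw [← hηV]
    have := (mul_lt_mul_iff_right₀ hγup).2 (mem_Ioi.1 hx)
    linarith
  have hupos : ∀ x ∈ Ioi ηV, (0:ℝ) < 1 + γup * x := fun x hx =>
    lt_trans (lt_trans one_pos hKr1) (hu x hx)
  have hS : ∀ x ∈ Ioi ηV, K < S x := by
    intro x hx
    have h1 := hu x hx
    have h0 : (0:ℝ) < K ^ (1/αup) := lt_trans one_pos hKr1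
    have := Real.rpow_lt_rpow h0.le h1 hαup
    rwa [← Real.rpow_mul hK0.le, one_div_mul_cancel hαup.ne', Real.rpow_one] at this
  have hden : ∀ x : ℝ, S x * c - A * Vreq = c * (S x - K) := by
    intro x
    rw [hKdef]
    field_simp
  have hg_eq : ∀ x ∈ Ioi ηV, g x = (K * (S x - 1) / (S x - K)) ^ (1/αdn) - 1 := by
    intro x hx
    have hSx := hS x hx
    have hpos : (0:ℝ) < S x - K := sub_pos.2 hSx
    have hbase : A * Vreq * (S x - 1) / (c * (S x - K)) = K * (S x - 1) / (S x - K) := by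
      rw [hKdef, div_mul_eq_mul_div, div_div]
    simp only [g, ← hcdef, hden x, hbase]
  -- Continuity
  have hScont : ContinuousOn S (Ioi ηV) := by
    apply ContinuousOn.rpow_const
    · exact (continuous_const.add (continuous_const.mul continuous_id)).continuousOn
    · intro x hx; exact Or.inl (hupos x hx).ne'
  have hdenpos : ∀ x ∈ Ioi ηV, (0:ℝ) < S x * c - A * Vreq := by
    intro x hx
    rw [hden]
    exact mul_pos hc (sub_pos.2 (hS x hx))
  have hnumpos : ∀ x ∈ Ioi ηV, (0:ℝ) < A * Vreq * (S x - 1) := by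
    intro x hx
    have := hS x hx
    have hA0 : (0:ℝ) < A := lt_trans one_pos hA
    exact mul_pos (mul_pos hA0 hV0) (by linarith)
  have hcont : ContinuousOn g (Ioi ηV) := by
    simp only [g]
    apply ContinuousOn.sub _ continuousOn_const
    apply ContinuousOn.rpow_const
    · exact ContinuousOn.div (continuousOn_const.mul (hScont.sub continuousOn_const))
        ((hScont.mul continuousOn_const).sub continuousOn_const)
        (fun x hx => (hdenpos x hx).ne')
    · intro x hx
      exact Or.inl (div_pos (hnumpos x hx) (hdenpos x hx)).ne'
  -- Strict antitonicity
  have hfpos : ∀ x ∈ Ioi ηV, (0:ℝ) < K * (S x - 1) / (S x - K) := by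
    intro x hx
    have := hS x hx
    apply div_pos (by nlinarith) (by linarith)
  have hanti : StrictAntiOn g (Ioi ηV) := by
    intro x hx y hy hxy
    rw [hg_eq x hx, hg_eq y hy]
    have hSx := hS x hx
    have hSy := hS y hy
    have hSxy : S x < S y := by
      apply Real.rpow_lt_rpow (hupos x hx).le _ hαup
      have := (mul_lt_mul_iff_right₀ hγup).2 hxy
      linarith
    have hlt : K * (S y - 1) / (S y - K) < K * (S x - 1) / (S x - K) := by
      rw [div_lt_div_iff₀ (by linarith) (by linarith)]
      nlinarith [mul_pos (mul_pos hK0 (sub_pos.2 hK1)) (sub_pos.2 hSxy)]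
    have := Real.rpow_lt_rpow (hfpos y hy).le hlt
      (show (0:ℝ) < 1/αdn by positivity)
    linarith
  -- Blow-up at ηV⁺
  have hSη : S ηV = K := by
    simp only [S]
    rw [hηV, ← Real.rpow_mul hK0.le, one_div_mul_cancel hαup.ne', Real.rpow_one]
  have hStendη : Tendsto S (nhdsWithin ηV (Ioi ηV)) (nhds K) := by
    have hcontS : ContinuousAt S ηV := by
      have h1 : ContinuousAt (fun x : ℝ => 1 + γup * x) ηV :=
        (continuous_const.add (continuous_const.mul continuous_id)).continuousAt
      exact h1.rpow_const (Or.inl (by rw [hηV]; positivity))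
    rw [← hSη]
    exact hcontS.continuousWithinAt.tendsto
  have h3 : Tendsto g (nhdsWithin ηV (Ioi ηV)) atTop := by
    have hev : (fun x => (K * (S x - 1) / (S x - K)) ^ (1/αdn) - 1) =ᶠ[nhdsWithin ηV (Ioi ηV)] g := by
      filter_upwards [self_mem_nhdsWithin] with x hx
      exact (hg_eq x hx).symm
    apply Tendsto.congr' hev
    have hinv : Tendsto (fun x => (S x - K)⁻¹) (nhdsWithin ηV (Ioi ηV)) atTop := by
      apply tendsto_inv_nhdsGT_zero.comp
      rw [tendsto_nhdsWithin_iff]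
      constructor
      · have := hStendη.sub (tendsto_const_nhds : Tendsto (fun _ : ℝ => K) _ _)
        simpa using this
      · filter_upwards [self_mem_nhdsWithin] with x hx
        exact sub_pos.2 (hS x hx)
    have hnum : Tendsto (fun x => K * (S x - 1)) (nhdsWithin ηV (Ioi ηV)) (nhds (K * (K - 1))) :=
      tendsto_const_nhds.mul (hStendη.sub tendsto_const_nhds)
    have hfrac : Tendsto (fun x => K * (S x - 1) / (S x - K)) (nhdsWithin ηV (Ioi ηV)) atTop := by
      simp only [div_eq_mul_inv]
      exact hnum.pos_mul_atTop (by nlinarith) hinv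
    have := (tendsto_rpow_atTop (by positivity : (0:ℝ) < 1/αdn)).comp hfrac
    simpa [sub_eq_add_neg] using tendsto_atTop_add_const_right _ (-1 : ℝ) this
  -- Limit at infinity
  have h4 : Tendsto g atTop (nhds (K ^ (1/αdn) - 1)) := by
    have hev : (fun x => (K + K * (K - 1) * (S x - K)⁻¹) ^ (1/αdn) - 1) =ᶠ[atTop] g := by
      filter_upwards [Ioi_mem_atTop ηV] with x hx
      rw [hg_eq x hx]
      congr 2
      have hpos : (0:ℝ) < S x - K := sub_pos.2 (hS x hx)
      field_simp
      ring
    apply Tendsto.congr' hev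
    have hSinf : Tendsto S atTop atTop := by
      apply (tendsto_rpow_atTop hαup).comp
      apply tendsto_atTop_add_const_left
      exact (tendsto_id.const_mul_atTop hγup)
    have hinv0 : Tendsto (fun x => (S x - K)⁻¹) atTop (nhds 0) :=
      tendsto_inv_atTop_zero.comp (tendsto_atTop_add_const_right _ (-K) hSinf)
    have hinner : Tendsto (fun x => K + K * (K - 1) * (S x - K)⁻¹) atTop (nhds K) := by
      have h := (tendsto_const_nhds : Tendsto (fun _ : ℝ => K) atTop (nhds K)).add
        (hinv0.const_mul (K * (K - 1)))
      simpa using h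
    have hrpow : Tendsto (fun x => (K + K * (K - 1) * (S x - K)⁻¹) ^ (1/αdn)) atTop
        (nhds (K ^ (1/αdn))) :=
      (Real.continuousAt_rpow_const K (1/αdn) (Or.inl hK0.ne')).tendsto.comp hinner
    exact hrpow.sub tendsto_const_nhds
  exact ⟨hcont, hanti, h3, h4⟩
end

section
/- Let γ_U > 0 and γ_D > 0, assume P > 0, and for p ∈ [0,P] define f(p) = p·x/((P−p) r x + 1) and h(p) = (P−p)·y/(p r y + 1) for x, y > 0 and r ∈ [0,1). Then f is strictly increasing and h is strictly decreasing on [0,P], and there exists p ∈ [0,P] with f(p) ≥ γ_D and h(p) ≥ γ_U if and only if γ_D (P r x + 1)/(x(1+γ_D r)) ≤ (P y − γ_U)/(y(1+γ_U r)) (with the right side required nonnegative, i.e. P y ≥ γ_U). -/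
open Set

/-- MRT joint feasibility: the control SINR `f(p) = p x/((P-p) r x + 1)` is strictly
increasing and the communication SINR `h(p) = (P-p) y/(p r y + 1)` is strictly decreasing
on `[0,P]`, and both SINR targets `γ_D, γ_U` can be met simultaneously iff
`P y ≥ γ_U` and `γ_D (P r x + 1)/(x(1+γ_D r)) ≤ (P y - γ_U)/(y(1+γ_U r))`. -/
theorem mrt_joint_feasibility
    (x y r P γD γU : ℝ) (hx : x > 0) (hy : y > 0)
    (hr0 : 0 ≤ r) (hr1 : r < 1) (hP : P > 0) (hγD : γD > 0) (hγU : γU > 0) :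
    StrictMonoOn (fun p : ℝ => p * x / ((P - p) * r * x + 1)) (Icc 0 P) ∧
    StrictAntiOn (fun p : ℝ => (P - p) * y / (p * r * y + 1)) (Icc 0 P) ∧
    ((∃ p ∈ Icc 0 P,
        p * x / ((P - p) * r * x + 1) ≥ γD ∧
        (P - p) * y / (p * r * y + 1) ≥ γU) ↔
      P * y ≥ γU ∧
        γD * (P * r * x + 1) / (x * (1 + γD * r)) ≤
          (P * y - γU) / (y * (1 + γU * r))) := by
  have hDx : ∀ p ∈ Icc (0:ℝ) P, 0 < (P - p) * r * x + 1 := by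
    intro p hp
    nlinarith [mul_nonneg (mul_nonneg (sub_nonneg.2 hp.2) hr0) hx.le]
  have hDy : ∀ p ∈ Icc (0:ℝ) P, 0 < p * r * y + 1 := by
    intro p hp
    nlinarith [mul_nonneg (mul_nonneg hp.1 hr0) hy.le]
  have hx1 : 0 < x * (1 + γD * r) := by nlinarith [mul_nonneg hγD.le hr0]
  have hy1 : 0 < y * (1 + γU * r) := by nlinarith [mul_nonneg hγU.le hr0]
  refine ⟨?_, ?_, ?_⟩
  · intro a ha b hb hab
    simp only
    rw [div_lt_div_iff₀ (hDx a ha) (hDx b hb)]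
    nlinarith [mul_pos (sub_pos.2 hab) hx,
      mul_nonneg (mul_nonneg (mul_nonneg (sub_pos.2 hab).le hP.le) hr0)
        (mul_pos hx hx).le]
  · intro a ha b hb hab
    simp only
    rw [div_lt_div_iff₀ (hDy b hb) (hDy a ha)]
    nlinarith [mul_pos (sub_pos.2 hab) hy,
      mul_nonneg (mul_nonneg (mul_nonneg (sub_pos.2 hab).le hP.le) hr0)
        (mul_pos hy hy).le]
  · constructor
    · rintro ⟨p, hp, hf, hh⟩
      have h1 : γD * ((P - p) * r * x + 1) ≤ p * x := (le_div_iff₀ (hDx p hp)).mp hf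
      have h2 : γU * (p * r * y + 1) ≤ (P - p) * y := (le_div_iff₀ (hDy p hp)).mp hh
      refine ⟨?_, ?_⟩
      · nlinarith [mul_nonneg hp.1 hy.le,
          mul_nonneg (mul_nonneg (mul_nonneg hγU.le hp.1) hr0) hy.le]
      · have hm : γD * (P * r * x + 1) / (x * (1 + γD * r)) ≤ p :=
          (div_le_iff₀ hx1).mpr (by nlinarith)
        have hM : p ≤ (P * y - γU) / (y * (1 + γU * r)) :=
          (le_div_iff₀ hy1).mpr (by nlinarith)
        exact hm.trans hM
    · rintro ⟨hPy, hle⟩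
      set p : ℝ := (P * y - γU) / (y * (1 + γU * r)) with hpdef
      have hp0 : 0 ≤ p := div_nonneg (by linarith) hy1.le
      have hpP : p ≤ P := by
        rw [hpdef, div_le_iff₀ hy1]
        nlinarith [mul_nonneg (mul_nonneg (mul_nonneg hP.le hy.le) hγU.le) hr0]
      have hpmem : p ∈ Icc (0:ℝ) P := ⟨hp0, hpP⟩
      have hpy : p * (y * (1 + γU * r)) = P * y - γU := div_mul_cancel₀ _ hy1.ne'
      have hmp : γD * (P * r * x + 1) ≤ p * (x * (1 + γD * r)) :=
        (div_le_iff₀ hx1).mp hle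
      refine ⟨p, hpmem, ?_, ?_⟩
      · rw [ge_iff_le, le_div_iff₀ (hDx p hpmem)]
        nlinarith
      · rw [ge_iff_le, le_div_iff₀ (hDy p hpmem)]
        nlinarith
end

section
/- Let |a|² > 1, S > |a|², σ_w² > 0, and let G(γ) = (1+γ)^α for α > 0. Define γ_min = (|a|²(S−1)/(S−|a|²))^{1/α} − 1. Let γ_max > γ_min and G_max = (1+γ_max)^α. Then for every V satisfying σ_w² S G_max/(S G_max − |a|²(S+G_max−1)) ≤ V there exists a unique γ ∈ (γ_min, γ_max] with σ_w² S (1+γ)^α / (S(1+γ)^α − |a|²(S + (1+γ)^α − 1)) = V, i.e., the map γ ↦ V_∞(γ) is a strictly decreasing bijection from (γ_min, γ_max] onto [V_∞(γ_max), ∞). -/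
open Set

private lemma pareto_aux (A S σw2 α γmax : ℝ)
    (hA : 1 < A) (hS : A < S) (hσ : 0 < σw2) (hα : 0 < α)
    (hγmax : (A * (S - 1) / (S - A)) ^ (1 / α) - 1 < γmax) :
    StrictAntiOn (fun γ : ℝ =>
        σw2 * S * (1 + γ) ^ α / (S * (1 + γ) ^ α - A * (S + (1 + γ) ^ α - 1)))
      (Ioc ((A * (S - 1) / (S - A)) ^ (1 / α) - 1) γmax) ∧
    Set.BijOn (fun γ : ℝ =>
        σw2 * S * (1 + γ) ^ α / (S * (1 + γ) ^ α - A * (S + (1 + γ) ^ α - 1)))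
      (Ioc ((A * (S - 1) / (S - A)) ^ (1 / α) - 1) γmax)
      (Ici ((fun γ : ℝ =>
        σw2 * S * (1 + γ) ^ α / (S * (1 + γ) ^ α - A * (S + (1 + γ) ^ α - 1))) γmax)) := by
  have hSA : 0 < S - A := by linarith
  have hS1 : 0 < S - 1 := by linarith
  have hSpos : 0 < S := by linarith
  have hApos : 0 < A := by linarith
  set c : ℝ := A * (S - 1) / (S - A) with hc_def
  have hc1 : 1 < c := by
    rw [hc_def, lt_div_iff₀ hSA]; nlinarith
  have hc0 : 0 < c := by linarith
  have hcSA : (S - A) * c = A * (S - 1) := by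
    have := hSA.ne'
    rw [hc_def]; field_simp
  set γmin : ℝ := c ^ (1/α) - 1 with hγmin_def
  set f : ℝ → ℝ := fun γ =>
    σw2 * S * (1 + γ) ^ α / (S * (1 + γ) ^ α - A * (S + (1 + γ) ^ α - 1)) with hf_def
  have hcr0 : 0 < c ^ (1/α) := Real.rpow_pos_of_pos hc0 _
  have hcpow : (c ^ (1/α)) ^ α = c := by
    rw [← Real.rpow_mul hc0.le, one_div_mul_cancel hα.ne', Real.rpow_one]
  -- basic facts for γ > γmin
  have hbase : ∀ γ : ℝ, γmin < γ → 0 < 1 + γ := by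
    intro γ hγ
    have : c ^ (1/α) < 1 + γ := by rw [hγmin_def] at hγ; linarith
    linarith
  have hg : ∀ γ : ℝ, γmin < γ → c < (1 + γ) ^ α := by
    intro γ hγ
    have h1 : c ^ (1/α) < 1 + γ := by rw [hγmin_def] at hγ; linarith
    calc c = (c ^ (1/α)) ^ α := hcpow.symm
    _ < (1 + γ) ^ α := Real.rpow_lt_rpow hcr0.le h1 hα
  have hD : ∀ γ : ℝ, γmin < γ →
      0 < S * (1 + γ) ^ α - A * (S + (1 + γ) ^ α - 1) := by
    intro γ hγ
    have hgγ := hg γ hγ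
    nlinarith [mul_lt_mul_of_pos_left hgγ hSA]
  -- strict antitonicity
  have hanti : StrictAntiOn f (Ioc γmin γmax) := by
    intro x hx y hy hxy
    have hDx := hD x hx.1
    have hDy := hD y hy.1
    have hgx := hg x hx.1
    have hgy := hg y hy.1
    have hlt : (1 + x) ^ α < (1 + y) ^ α :=
      Real.rpow_lt_rpow (hbase x hx.1).le (by linarith) hα
    have h0 : 0 < σw2 * S * (A * (S - 1)) := by positivity
    simp only [hf_def]
    rw [div_lt_div_iff₀ hDy hDx]
    nlinarith [mul_lt_mul_of_pos_left hlt h0]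
  have hγmaxmem : γmax ∈ Ioc γmin γmax := ⟨hγmax, le_refl _⟩
  refine ⟨hanti, ?_, hanti.injOn, ?_⟩
  · -- MapsTo
    intro γ hγ
    rcases eq_or_lt_of_le hγ.2 with h | h
    · simp [h]
    · exact le_of_lt (hanti hγ hγmaxmem h)
  · -- SurjOn
    intro V hV
    simp only [mem_Ici] at hV
    set gmax : ℝ := (1 + γmax) ^ α with hgmax_def
    have hgmaxc : c < gmax := hg γmax hγmax
    have hDmax : 0 < S * gmax - A * (S + gmax - 1) := hD γmax hγmax
    have hgmax0 : 0 < gmax := by linarith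
    have hVmaxpos : 0 < f γmax := by
      simp only [hf_def]
      positivity
    have hVpos : 0 < V := lt_of_lt_of_le hVmaxpos hV
    have hVD : σw2 * S * gmax ≤ V * (S * gmax - A * (S + gmax - 1)) := by
      have := (div_le_iff₀ hDmax).mp hV
      linarith
    have hE : 0 < V * (S - A) - σw2 * S := by
      have h1 : σw2 * S * gmax + V * (A * (S - 1)) ≤ V * (S - A) * gmax := by nlinarith
      have h2 : 0 < V * (A * (S - 1)) := by positivity
      nlinarith
    set g : ℝ := V * (A * (S - 1)) / (V * (S - A) - σw2 * S) with hg_def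
    have hgc : c < g := by
      rw [hg_def, hc_def, div_lt_div_iff₀ hSA hE]
      nlinarith [mul_pos (mul_pos hApos hS1) (mul_pos hσ hSpos)]
    have hg0 : 0 < g := by linarith
    have hgle : g ≤ gmax := by
      rw [hg_def, div_le_iff₀ hE]
      nlinarith
    have hkey : g * (V * (S - A) - σw2 * S) = V * (A * (S - 1)) := by
      rw [hg_def, div_mul_cancel₀ _ hE.ne']
    refine ⟨g ^ (1/α) - 1, ⟨?_, ?_⟩, ?_⟩
    · -- γmin < γ
      have : c ^ (1/α) < g ^ (1/α) := Real.rpow_lt_rpow hc0.le hgc (by positivity)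
      rw [hγmin_def]; linarith
    · -- γ ≤ γmax
      have h1 : g ^ (1/α) ≤ gmax ^ (1/α) :=
        Real.rpow_le_rpow hg0.le hgle (by positivity)
      have h2 : gmax ^ (1/α) = 1 + γmax := by
        rw [hgmax_def, ← Real.rpow_mul (hbase γmax hγmax).le,
          mul_one_div_cancel hα.ne', Real.rpow_one]
      linarith [h1.trans_eq h2]
    · -- f γ = V
      have hγpow : (1 + (g ^ (1/α) - 1)) ^ α = g := by
        rw [show (1 : ℝ) + (g ^ (1/α) - 1) = g ^ (1/α) by ring,
          ← Real.rpow_mul hg0.le, one_div_mul_cancel hα.ne', Real.rpow_one]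
      have hγmem : γmin < g ^ (1/α) - 1 := by
        have : c ^ (1/α) < g ^ (1/α) := Real.rpow_lt_rpow hc0.le hgc (by positivity)
        rw [hγmin_def]; linarith
      have hDg : 0 < S * g - A * (S + g - 1) := by
        have := hD _ hγmem
        rwa [hγpow] at this
      simp only [hf_def, hγpow]
      rw [div_eq_iff hDg.ne']
      linear_combination (-1 : ℝ) * hkey

/-- The map `γ ↦ V_∞(γ) = σw² S (1+γ)^α / (S(1+γ)^α - |a|²(S+(1+γ)^α-1))` is a strictly
decreasing bijection from `(γ_min, γ_max]` onto `[V_∞(γ_max), ∞)`, where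
`γ_min = (|a|²(S-1)/(S-|a|²))^{1/α} - 1`. -/
theorem pareto_parameterization
    (a : ℂ) (S σw2 α γmax : ℝ)
    (ha : ‖a‖ ^ 2 > 1) (hS : S > ‖a‖ ^ 2)
    (hσ : σw2 > 0) (hα : α > 0)
    (hγmax :
      γmax > (‖a‖ ^ 2 * (S - 1) / (S - ‖a‖ ^ 2)) ^ (1 / α) - 1) :
    let A := ‖a‖ ^ 2
    let γmin := (A * (S - 1) / (S - A)) ^ (1 / α) - 1
    let Vinf := fun γ : ℝ =>
      σw2 * S * (1 + γ) ^ α / (S * (1 + γ) ^ α - A * (S + (1 + γ) ^ α - 1))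
    StrictAntiOn Vinf (Ioc γmin γmax) ∧
      Set.BijOn Vinf (Ioc γmin γmax) (Ici (Vinf γmax)) := by
  exact pareto_aux (‖a‖ ^ 2) S σw2 α γmax ha hS hσ hα hγmax
end
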